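/- Consider the Battling Influencers Game with the negative inner product loss ℓ_i(x) = −⟨t_i, w_0 x_0 + ∑_{j=1}^n w_j x_j⟩. Fix a player i and suppose x_i* ∈ 𝒳 maximizes x_i ↦ w_i ⟨t_i, x_i⟩ over 𝒳. Then x_i* is a best response to every joint action of the other players: for all x_{−i} ∈ 𝒳^{n−1} and all y ∈ 𝒳, ℓ_i(x_i*, x_{−i}) ≤ ℓ_i(y, x_{−i}). Consequently, any profile (x_1*,...,x_n*) in which each x_i* maximizes w_i ⟨t_i, ·⟩ over 𝒳 is a weakly dominant strategy equilibrium. -/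
import Mathlib


open scoped RealInnerProductSpace

noncomputable section

/-- Player `i`'s negative inner product loss in the Battling Influencers Game:
`ℓ_i(x) = −⟨t_i, w_0 x_0 + ∑_{j=1}^n w_j x_j⟩`. -/
def lossIP {d n : ℕ} (w0 : ℝ) (x0 : EuclideanSpace ℝ (Fin d)) (w : Fin n → ℝ)
    (t : Fin n → EuclideanSpace ℝ (Fin d)) (i : Fin n)
    (x : Fin n → EuclideanSpace ℝ (Fin d)) : ℝ :=
  -⟪t i, w0 • x0 + (∑ j, w j • x j)⟫

/-- Under the negative inner product loss, any `x_i⋆ ∈ 𝒳` maximizing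
`x_i ↦ w_i ⟨t_i, x_i⟩` over `𝒳` is a best response of player `i` to every joint
action of the others; consequently, a profile of such maximizers is a weakly
dominant strategy equilibrium. -/
theorem maximizer_isBestResponse_wDSE {d n : ℕ}
    (X : Set (EuclideanSpace ℝ (Fin d)))
    (w0 : ℝ) (x0 : EuclideanSpace ℝ (Fin d)) (w : Fin n → ℝ)
    (t : Fin n → EuclideanSpace ℝ (Fin d))
    (xstar : Fin n → EuclideanSpace ℝ (Fin d))
    (hmem : ∀ i, xstar i ∈ X)
    (hmax : ∀ i, ∀ y ∈ X, w i * ⟪t i, y⟫ ≤ w i * ⟪t i, xstar i⟫) :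
    ∀ i : Fin n, ∀ x : Fin n → EuclideanSpace ℝ (Fin d), (∀ j, x j ∈ X) →
      ∀ y ∈ X,
        lossIP w0 x0 w t i (Function.update x i (xstar i))
          ≤ lossIP w0 x0 w t i (Function.update x i y) := by
  intro i x hx y hy
  have key : ∀ z : EuclideanSpace ℝ (Fin d),
      lossIP w0 x0 w t i (Function.update x i z) =
        -⟪t i, w0 • x0⟫ -
          (∑ j ∈ Finset.univ.erase i, w j * ⟪t i, x j⟫) - w i * ⟪t i, z⟫ := by
    intro z
    unfold lossIP
    rw [inner_add_right, inner_sum]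
    have hsum : (∑ j, ⟪t i, w j • Function.update x i z j⟫) =
        (∑ j ∈ Finset.univ.erase i, w j * ⟪t i, x j⟫) + w i * ⟪t i, z⟫ := by
      rw [← Finset.sum_erase_add _ _ (Finset.mem_univ i)]
      congr 1
      · refine Finset.sum_congr rfl fun j hj => ?_
        rw [Function.update_of_ne (Finset.ne_of_mem_erase hj), real_inner_smul_right]
      · rw [Function.update_self, real_inner_smul_right]
    rw [hsum]; ring
  rw [key, key]
  have := hmax i y hy
  linarith

end
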